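/- arXiv:2002.08120 — 2 statements merged into one kernel-verified Lean document; each statement's English description precedes it below -/
import Mathlib

section
/- Let n be a positive integer, n′ := rad(n), and h := n/n′. For every integer t not divisible by h, the Ramanujan sum c_n(t) equals 0. -/
open Matrix Polynomial BigOperators

/-- The Frobenius norm of a square complex matrix. -/
noncomputable def frobNorm {k : ℕ} (A : Matrix (Fin k) (Fin k) ℂ) : ℝ :=
  Real.sqrt (∑ i, ∑ j, ‖A i j‖ ^ 2)

/-- The condition number `Cond(A) = ‖A‖ ‖A⁻¹‖` (Frobenius norm). -/
noncomputable def condNum {k : ℕ} (A : Matrix (Fin k) (Fin k) ℂ) : ℝ :=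
  frobNorm A * frobNorm A⁻¹

/-- The Vandermonde matrix with (i,j) entry `ζ i ^ j` (0-indexed). -/
def vand {m : ℕ} (ζ : Fin m → ℂ) : Matrix (Fin m) (Fin m) ℂ :=
  Matrix.of fun i j => ζ i ^ (j : ℕ)

/-- The radical of `n`: the product of the distinct prime factors of `n`. -/
def rad (n : ℕ) : ℕ := ∏ p ∈ n.primeFactors, p

/-- The Ramanujan sum `c_n(t)`: the sum of the `t`-th powers of the
primitive `n`-th roots of unity in `ℂ`. -/
noncomputable def ram (n : ℕ) (t : ℤ) : ℂ := ∑ z ∈ primitiveRoots n ℂ, z ^ t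

/-!
Put `h = n / rad n`. If `ω ^ h = 1` then `ω` is a power of `z ^ rad n` for any primitive `n`-th
root `z`, so `ω * z = z ^ (1 + rad n * j)`; the exponent is prime to `n`, hence multiplication
by `ω` permutes the primitive `n`-th roots and `c_n(t) = ω ^ t c_n(t)`. Choosing `ω` a primitive
`h`-th root of unity, `ω ^ t ≠ 1` as soon as `h ∤ t`.
-/

lemma rad_dvd_self (n : ℕ) : rad n ∣ n := Nat.prod_primeFactors_dvd n

lemma rad_pos (n : ℕ) : 0 < rad n :=
  Finset.prod_pos fun _ hp => (Nat.prime_of_mem_primeFactors hp).pos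

lemma div_rad_pos {n : ℕ} (hn : 0 < n) : 0 < n / rad n :=
  Nat.div_pos (Nat.le_of_dvd hn (rad_dvd_self n)) (rad_pos n)

lemma coprime_one_add_rad_mul {n : ℕ} (hn : n ≠ 0) (j : ℕ) : (1 + rad n * j).Coprime n := by
  refine Nat.coprime_of_dvd fun p hp hpj hpn => hp.one_lt.ne' (Nat.eq_one_of_dvd_one ?_)
  have hprad : p ∣ rad n := Finset.dvd_prod_of_mem _ (Nat.mem_primeFactors.mpr ⟨hp, hpn, hn⟩)
  exact (Nat.dvd_add_left (dvd_mul_of_dvd_left hprad j)).mp hpj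

lemma IsPrimitiveRoot.mul_of_pow_div_rad_eq_one {R : Type*} [CommRing R] [IsDomain R]
    {n : ℕ} (hn : 0 < n) {z ω : R} (hz : IsPrimitiveRoot z n) (hω : ω ^ (n / rad n) = 1) :
    IsPrimitiveRoot (ω * z) n := by
  have hzrad : IsPrimitiveRoot (z ^ rad n) (n / rad n) :=
    hz.pow hn (Nat.mul_div_cancel' (rad_dvd_self n)).symm
  have : NeZero (n / rad n) := ⟨(div_rad_pos hn).ne'⟩
  obtain ⟨j, -, rfl⟩ := hzrad.eq_pow_of_pow_eq_one hω
  rw [← pow_mul, ← pow_succ, add_comm]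
  exact hz.pow_of_coprime _ (coprime_one_add_rad_mul hn.ne' j)

lemma sum_primitiveRoots_zpow_eq_zpow_mul {K : Type*} [Field K] {n : ℕ} (hn : 0 < n) {ω : K}
    (hω : ω ^ (n / rad n) = 1) (t : ℤ) :
    ∑ z ∈ primitiveRoots n K, z ^ t = ω ^ t * ∑ z ∈ primitiveRoots n K, z ^ t := by
  have hω0 : ω ≠ 0 := by
    rintro rfl
    simp [zero_pow (div_rad_pos hn).ne'] at hω
  rw [Finset.mul_sum]
  refine Finset.sum_nbij' (ω⁻¹ * ·) (ω * ·) ?_ ?_ ?_ ?_ ?_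
  · intro z hz
    rw [mem_primitiveRoots hn] at hz ⊢
    exact hz.mul_of_pow_div_rad_eq_one hn (by rw [inv_pow, hω, inv_one])
  · intro z hz
    rw [mem_primitiveRoots hn] at hz ⊢
    exact hz.mul_of_pow_div_rad_eq_one hn hω
  · exact fun z _ => mul_inv_cancel_left₀ hω0 z
  · exact fun z _ => inv_mul_cancel_left₀ hω0 z
  · intro z _
    rw [← mul_zpow, mul_inv_cancel_left₀ hω0]

/-- With `h = n / rad n`, if `h` does not divide `t` then `c_n(t) = 0`. -/
theorem ram_eq_zero_of_not_dvd (n : ℕ) (hn : 0 < n) (t : ℤ)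
    (ht : ¬ (((n / rad n : ℕ) : ℤ) ∣ t)) :
    ram n t = 0 := by
  obtain ⟨ω, hω⟩ : ∃ ω : ℂ, IsPrimitiveRoot ω (n / rad n) :=
    ⟨_, Complex.isPrimitiveRoot_exp _ (div_rad_pos hn).ne'⟩
  have hωt : ω ^ t ≠ 1 := mt (hω.zpow_eq_one_iff_dvd t).mp ht
  have hfix : ram n t = ω ^ t * ram n t :=
    sum_primitiveRoots_zpow_eq_zpow_mul hn hω.pow_eq_one t
  have : (ω ^ t - 1) * ram n t = 0 := by rw [sub_mul, ← hfix, one_mul, sub_self]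
  exact (mul_eq_zero.mp this).resolve_left (sub_ne_zero.mpr hωt)
end

section
/- For every odd positive integer n, one has G_{2n} = J^{−1} G_n J, where J is the m×m diagonal matrix with diagonal entries J_{i,i} = (−1)^i (m := φ(n)); in particular G_{2n} and G_n are similar. -/
open Matrix Polynomial BigOperators

/-!
Negation maps the primitive `2n`-th roots of unity bijectively onto the primitive `n`-th roots
when `n` is odd. The `(j, k)` entry of `V_ξᴴ V_ξ` is `∑ conj(ξ)^j ξ^k` over the roots, and replacing
`ξ` by `-ξ` multiplies each term by `(-1)^(j+k)`, which is exactly the conjugation by `J`.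
-/

theorem IsPrimitiveRoot.neg_of_two_mul {R : Type*} [CommRing R] [NoZeroDivisors R]
    {n : ℕ} (hodd : Odd n) {ξ : R} (h : IsPrimitiveRoot ξ (2 * n)) :
    IsPrimitiveRoot (-ξ) n := by
  have hξn : ξ ^ n = -1 := by
    have h2 := h.pow_of_dvd hodd.pos.ne' (dvd_mul_left n 2)
    rw [Nat.mul_div_cancel _ hodd.pos] at h2
    exact h2.eq_neg_one_of_two_right
  refine ⟨by rw [hodd.neg_pow, hξn, neg_neg], fun l hl => ?_⟩
  have h2l : ξ ^ (2 * l) = 1 := by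
    rw [pow_mul, ← neg_sq, ← pow_mul, mul_comm, pow_mul, hl, one_pow]
  exact Nat.dvd_of_mul_dvd_mul_left two_pos (h.dvd_of_pow_eq_one _ h2l)

theorem sum_comp_eq_sum_primitiveRoots {R M : Type*} [CommRing R] [IsDomain R]
    [AddCommMonoid M] {n : ℕ} (hn : 0 < n) {g : Fin n.totient → R} (hg : Function.Injective g)
    (hprim : ∀ i, IsPrimitiveRoot (g i) n) (f : R → M) :
    ∑ i, f (g i) = ∑ z ∈ primitiveRoots n R, f z := by
  classical
  have himage : Finset.univ.image g = primitiveRoots n R := by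
    refine Finset.eq_of_subset_of_card_le ?_ ?_
    · simpa [Finset.subset_iff, mem_primitiveRoots hn] using hprim
    · rw [(hprim ⟨0, Nat.totient_pos.mpr hn⟩).card_primitiveRoots,
        Finset.card_image_of_injective _ hg, Finset.card_univ, Fintype.card_fin]
  rw [← himage, Finset.sum_image fun a _ b _ hab => hg hab]

theorem conjTranspose_vand_mul_vand_apply {m : ℕ} (ζ : Fin m → ℂ) (j k : Fin m) :
    ((vand ζ)ᴴ * vand ζ) j k = ∑ i, star (ζ i) ^ (j : ℕ) * ζ i ^ (k : ℕ) := by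
  simp [Matrix.mul_apply, vand, Matrix.conjTranspose_apply]

theorem star_neg_pow_mul_neg_pow {R : Type*} [CommRing R] [StarRing R] (z : R) (j k : ℕ) :
    star (-z) ^ j * (-z) ^ k = (-1) ^ (j + k) * (star z ^ j * z ^ k) := by
  rw [star_neg, neg_pow, neg_pow z, pow_add]
  ring

theorem sum_star_pow_mul_pow_of_primitive_two_mul {n : ℕ} (hodd : Odd n)
    {ζ ξ : Fin n.totient → ℂ} (hζinj : Function.Injective ζ) (hζ : ∀ i, IsPrimitiveRoot (ζ i) n)
    (hξinj : Function.Injective ξ) (hξ : ∀ i, IsPrimitiveRoot (ξ i) (2 * n)) (j k : ℕ) :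
    ∑ i, star (ξ i) ^ j * ξ i ^ k = (-1) ^ (j + k) * ∑ i, star (ζ i) ^ j * ζ i ^ k := by
  have hnegξ : ∀ i, IsPrimitiveRoot (-ξ i) n := fun i => (hξ i).neg_of_two_mul hodd
  have hnegξinj : Function.Injective fun i => -ξ i := neg_injective.comp hξinj
  calc ∑ i, star (ξ i) ^ j * ξ i ^ k
      = ∑ i, (-1) ^ (j + k) * (star (-ξ i) ^ j * (-ξ i) ^ k) := by
        refine Finset.sum_congr rfl fun i _ => ?_
        rw [star_neg_pow_mul_neg_pow, ← mul_assoc, ← pow_add, Even.neg_one_pow ⟨_, rfl⟩,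
          one_mul]
    _ = (-1) ^ (j + k) * ∑ i, star (ζ i) ^ j * ζ i ^ k := by
        rw [← Finset.mul_sum,
          sum_comp_eq_sum_primitiveRoots hodd.pos hnegξinj hnegξ fun z => star z ^ j * z ^ k,
          sum_comp_eq_sum_primitiveRoots hodd.pos hζinj hζ fun z => star z ^ j * z ^ k]

theorem gram_two_mul_similar_general (n : ℕ) (hodd : Odd n)
    (ζ : Fin n.totient → ℂ) (hζinj : Function.Injective ζ)
    (hζ : ∀ i, IsPrimitiveRoot (ζ i) n)
    (ξ : Fin n.totient → ℂ) (hξinj : Function.Injective ξ)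
    (hξ : ∀ i, IsPrimitiveRoot (ξ i) (2 * n)) :
    (vand ξ)ᴴ * vand ξ =
      (Matrix.diagonal fun i : Fin n.totient => (-1 : ℂ) ^ ((i : ℕ) + 1))⁻¹ *
        ((vand ζ)ᴴ * vand ζ) *
        Matrix.diagonal fun i : Fin n.totient => (-1 : ℂ) ^ ((i : ℕ) + 1) := by
  set s : Fin n.totient → ℂ := fun i => (-1) ^ ((i : ℕ) + 1)
  have hs : ∀ i, s i * s i = 1 := fun i => by
    simp only [s, ← pow_add, Even.neg_one_pow ⟨_, rfl⟩]
  have hJ : (diagonal s)⁻¹ = diagonal s :=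
    inv_eq_left_inv (by rw [diagonal_mul_diagonal, ← diagonal_one]; exact congrArg _ (funext hs))
  ext j k
  rw [hJ, mul_diagonal, diagonal_mul, conjTranspose_vand_mul_vand_apply,
    conjTranspose_vand_mul_vand_apply,
    sum_star_pow_mul_pow_of_primitive_two_mul hodd hζinj hζ hξinj hξ]
  have hsign : s j * s k = (-1) ^ ((j : ℕ) + k) := by
    rw [← pow_add, show (j : ℕ) + 1 + ((k : ℕ) + 1) = j + k + 2 by ring, pow_add]
    norm_num
  rw [mul_right_comm, hsign]

/-- For every odd positive integer `n`, `G_{2n} = J⁻¹ * G_n * J`,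
where `J` is the diagonal matrix with entries `J_{i,i} = (-1)^i` (1-based `i`);
here `G_{2n}` is built from an enumeration `ξ` of the primitive `2n`-th roots of
unity (note `φ(2n) = φ(n)` for odd `n`). -/
theorem gram_two_mul_similar (n : ℕ) (hn : 0 < n) (hodd : Odd n)
    (ζ : Fin n.totient → ℂ) (hζinj : Function.Injective ζ)
    (hζ : ∀ i, IsPrimitiveRoot (ζ i) n)
    (ξ : Fin n.totient → ℂ) (hξinj : Function.Injective ξ)
    (hξ : ∀ i, IsPrimitiveRoot (ξ i) (2 * n)) :
    (vand ξ)ᴴ * vand ξ =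
      (Matrix.diagonal fun i : Fin n.totient => (-1 : ℂ) ^ ((i : ℕ) + 1))⁻¹ *
        ((vand ζ)ᴴ * vand ζ) *
        Matrix.diagonal fun i : Fin n.totient => (-1 : ℂ) ^ ((i : ℕ) + 1) :=
  gram_two_mul_similar_general n hodd ζ hζinj hζ ξ hξinj hξ
end
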